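/- Let P be a finite graded poset with an ER-labeling λ. Then for each k, |w_k(P)| equals the number of ascent-free saturated chains of length k in P starting at 0̂, and W_k(P) equals the number of strictly increasing saturated chains of length k starting at 0̂. -/

import Mathlib

attribute [local instance] Classical.propDecidable

/-- The Möbius function of a finite poset (preorder suffices for the recursion),
defined by `μ x x = 1` and `μ x y = -∑_{x ≤ z < y} μ x z`. -/
noncomputable def mobius {P : Type} [Preorder P] [Fintype P] (x : P) : P → ℤ
  | y =>
    if x = y then 1
    else -∑ z ∈ (Finset.univ.filter fun z : P => x ≤ z ∧ z < y).attach, mobius x z.1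
termination_by y => (Finset.univ.filter fun z : P => z < y).card
decreasing_by
  have hz := z.2
  simp only [Finset.mem_filter] at hz
  refine Finset.card_lt_card ((Finset.ssubset_iff_of_subset fun w hw => ?_).mpr ⟨z.1, ?_, ?_⟩)
  · simp only [Finset.mem_filter] at hw ⊢
    exact ⟨hw.1, hw.2.trans hz.2.2⟩
  · simp only [Finset.mem_filter]
    exact ⟨Finset.mem_univ _, hz.2.2⟩
  · simp only [Finset.mem_filter, not_and]
    exact fun _ => lt_irrefl _

/-- The `k`-th Whitney number of the first kind of a finite graded poset with
minimum `b` and rank function `ρ`: `w_k = ∑_{ρ x = k} μ(b, x)`. -/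
noncomputable def whitney1 {P : Type} [Preorder P] [Fintype P] (ρ : P → ℕ) (b : P) (k : ℕ) : ℤ :=
  ∑ x ∈ Finset.univ.filter fun x : P => ρ x = k, mobius b x

/-- The `k`-th Whitney number of the second kind: the number of elements of rank `k`. -/
noncomputable def whitney2 {P : Type} [Preorder P] [Fintype P] (ρ : P → ℕ) (k : ℕ) : ℕ :=
  (Finset.univ.filter fun x : P => ρ x = k).card
/-- A saturated chain in a poset: a nonempty list of elements in which each
consecutive pair is a covering relation. -/
def IsSatChain {P : Type} [PartialOrder P] (l : List P) : Prop :=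
  l ≠ [] ∧ l.Chain' (· ⋖ ·)

/-- A saturated (maximal) chain of the closed interval `[x, y]`: a saturated chain
starting at `x` and ending at `y`. -/
def SatChainIn {P : Type} [PartialOrder P] (x y : P) (l : List P) : Prop :=
  IsSatChain l ∧ l.head? = some x ∧ l.getLast? = some y

/-- The word of labels of a chain `x₀ ⋖ x₁ ⋖ ⋯ ⋖ x_ℓ` under the edge labeling `lab`,
namely `lab x₀ x₁, lab x₁ x₂, …, lab x_{ℓ-1} x_ℓ`. -/
def labelWord {P Λ : Type} (lab : P → P → Λ) (l : List P) : List Λ :=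
  (l.zip l.tail).map fun q => lab q.1 q.2

/-- A word of labels is (strictly) increasing. -/
def IsIncreasing {Λ : Type} [Preorder Λ] (w : List Λ) : Prop := w.Chain' (· < ·)

/-- A word of labels is ascent-free: no two consecutive labels strictly increase. -/
def IsAscentFree {Λ : Type} [Preorder Λ] (w : List Λ) : Prop :=
  w.Chain' fun a b => ¬ a < b

/-- An ER-labeling: every closed interval `[x,y]` has a unique increasing maximal chain. -/
def IsER {P Λ : Type} [PartialOrder P] [Preorder Λ] (lab : P → P → Λ) : Prop :=
  ∀ x y : P, x ≤ y → ∃! l : List P, SatChainIn x y l ∧ IsIncreasing (labelWord lab l)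

/-- An ER*-labeling: every closed interval `[x,y]` has a unique ascent-free maximal chain. -/
def IsERStar {P Λ : Type} [PartialOrder P] [Preorder Λ] (lab : P → P → Λ) : Prop :=
  ∀ x y : P, x ≤ y → ∃! l : List P, SatChainIn x y l ∧ IsAscentFree (labelWord lab l)

/-- The chain `l` has an ascent at rank `i ≥ 1`: the `(i-1)`-st and `i`-th entries of its
label word (0-indexed), i.e. the labels of the covers at ranks `i` and `i+1`,
strictly increase. -/
def HasAscentAt {P Λ : Type} [PartialOrder P] [Preorder Λ] (lab : P → P → Λ)
    (l : List P) (i : ℕ) : Prop :=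
  IsSatChain l ∧ 1 ≤ i ∧
    ∃ a b, (labelWord lab l)[i-1]? = some a ∧ (labelWord lab l)[i]? = some b ∧ a < b

/-- `l'` is obtained from `l` by a quadratic exchange at rank `i`: it is a saturated
chain agreeing with `l` everywhere except (possibly) at position `i`, and its label
word is that of `l` with the labels at positions `i-1` and `i` interchanged. -/
def IsSwapAt {P Λ : Type} [PartialOrder P] [Preorder Λ] (lab : P → P → Λ)
    (l : List P) (i : ℕ) (l' : List P) : Prop :=
  IsSatChain l' ∧ l'.length = l.length ∧ (∀ m : ℕ, m ≠ i → l'[m]? = l[m]?) ∧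
    ∃ a b, (labelWord lab l)[i-1]? = some a ∧ (labelWord lab l)[i]? = some b ∧
      labelWord lab l' = ((labelWord lab l).set (i-1) b).set i a

/-- The rank two switching property: every saturated chain with an ascent at rank `i`
admits a unique chain, differing from it only at rank `i`, whose labels at the two
corresponding positions are interchanged and whose other labels agree. -/
def RankTwoSwitch {P Λ : Type} [PartialOrder P] [Preorder Λ] (lab : P → P → Λ) : Prop :=
  ∀ l : List P, ∀ i : ℕ, HasAscentAt lab l i → ∃! l' : List P, IsSwapAt lab l i l'

/-- The quadratic exchange operator `U_i` at rank `i`: performs the quadratic exchange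
at rank `i` if the chain has an ascent there, and is the identity otherwise. -/
noncomputable def Uop {P Λ : Type} [PartialOrder P] [Preorder Λ] {lab : P → P → Λ}
    (hR : RankTwoSwitch lab) (i : ℕ) (l : List P) : List P :=
  if h : HasAscentAt lab l i then (hR l i h).exists.choose else l

/-- One-step quadratic exchange relation on saturated chains. -/
def QExStep {P Λ : Type} [PartialOrder P] [Preorder Λ] (lab : P → P → Λ)
    (l l' : List P) : Prop :=
  ∃ i : ℕ, HasAscentAt lab l i ∧ IsSwapAt lab l i l'

/-- Two saturated chains are equivalent if they are connected by quadratic exchanges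
(i.e., lie in the same connected component of the exchange graph). -/
def ChainEquiv {P Λ : Type} [PartialOrder P] [Preorder Λ] (lab : P → P → Λ)
    (l l' : List P) : Prop :=
  Relation.EqvGen (QExStep lab) l l'

/-- The chain `l` has a double ascent (critical condition) at rank `i`. -/
def DoubleAscentAt {P Λ : Type} [PartialOrder P] [Preorder Λ] (lab : P → P → Λ)
    (l : List P) (i : ℕ) : Prop :=
  HasAscentAt lab l i ∧ HasAscentAt lab l (i+1)

/-- The braid relation for the quadratic exchange operators: on any saturated chain with
a double ascent at rank `i`, `U_i U_{i+1} U_i = U_{i+1} U_i U_{i+1}`. -/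
def BraidRel {P Λ : Type} [PartialOrder P] [Preorder Λ] {lab : P → P → Λ}
    (hR : RankTwoSwitch lab) : Prop :=
  ∀ (l : List P) (i : ℕ), DoubleAscentAt lab l i →
    Uop hR i (Uop hR (i+1) (Uop hR i l)) = Uop hR (i+1) (Uop hR i (Uop hR (i+1) l))

/-- The cancellative property: if `c` is a saturated chain of `[z,x]` and `c₁, c₂` are
saturated chains of `[x,y]` with `c ∪ c₁` and `c ∪ c₂` related by quadratic exchanges,
then `c₁` and `c₂` are related by quadratic exchanges. -/
def Cancellative {P Λ : Type} [PartialOrder P] [Preorder Λ] (lab : P → P → Λ) : Prop :=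
  ∀ (z x y : P) (c c₁ c₂ : List P), SatChainIn z x c → SatChainIn x y c₁ →
    SatChainIn x y c₂ → ChainEquiv lab (c ++ c₁.tail) (c ++ c₂.tail) →
      ChainEquiv lab c₁ c₂


/-!
Call `i` a split point of a maximal chain `d` of `[x, y]` if the label word of `d` has no ascent
before position `i` and increases from position `i` on. Cutting `d` at `d[i]` leaves an
ascent-free chain of `[x, d[i]]` followed by the increasing chain of `[d[i], y]`, and by the ER
property every ascent-free chain of some `[x, z]` with `z ≤ y` arises from exactly one such cut.
The split points of a nonempty word are either none or two consecutive positions, so for `x < y`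
the ascent-free chains `c` of all the intervals `[x, z] ⊆ [x, y]`, weighted by
`(-1) ^ (number of covers in c)`, cancel. This is the recursion of the Möbius function, hence
`μ(x, y)` is the signed number of ascent-free maximal chains of `[x, y]`, all of which have
`ρ y - ρ x` covers when `P` is graded. The second statement holds since each element is the top
of exactly one increasing chain from `⊥`.
-/

lemma List.length_le_one_of_isChain_of_isChain_not {α : Type*} {R : α → α → Prop}
    {l : List α} (h : l.IsChain R) (h' : l.IsChain fun a b => ¬ R a b) : l.length ≤ 1 := by
  match l, h, h' with
  | [], _, _ | [_], _, _ => simp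
  | _ :: _ :: _, h, h' =>
    exact absurd (List.isChain_cons_cons.mp h).1 (List.isChain_cons_cons.mp h').1

lemma List.drop_length_sub_one_append_tail {α : Type*} {c e : List α} {z : α}
    (hc : c.getLast? = some z) (he : e.head? = some z) :
    (c ++ e.tail).drop (c.length - 1) = e := by
  obtain ⟨c, rfl⟩ := List.getLast?_eq_some_iff.mp hc
  obtain ⟨t, rfl⟩ := List.head?_eq_some_iff.mp he
  simp

section SplitPoints

variable {Λ : Type} [Preorder Λ]

def SplitsAt (w : List Λ) (i : ℕ) : Prop :=
  (w.take i).IsChain (fun a b => ¬ a < b) ∧ (w.drop i).IsChain (· < ·)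

lemma SplitsAt.eq_succ_of_lt {w : List Λ} {i j : ℕ} (hi : SplitsAt w i) (hj : SplitsAt w j)
    (hij : i < j) (hjw : j ≤ w.length) : j = i + 1 := by
  have hinc : ((w.take j).drop i).IsChain (· < ·) := by
    rw [List.drop_take]
    exact hi.2.take _
  have hlen := List.length_le_one_of_isChain_of_isChain_not hinc (hj.1.drop i)
  simp only [List.length_drop, List.length_take] at hlen
  omega

lemma SplitsAt.exists_adjacent {w : List Λ} {i : ℕ} (h : SplitsAt w i) (hw : w ≠ [])
    (hiw : i ≤ w.length) :
    ∃ j ≤ w.length, (j = i + 1 ∨ j + 1 = i) ∧ SplitsAt w j := by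
  have short {l : List Λ} (R : Λ → Λ → Prop) (hl : l.length ≤ 1) : l.IsChain R :=
    List.isChain_iff_getElem.mpr fun m hm => by omega
  rcases Nat.eq_zero_or_pos i with rfl | hi0
  · refine ⟨1, List.length_pos_iff.mpr hw, Or.inl rfl, short _ (by simp), ?_⟩
    simpa [List.drop_one] using h.2.tail
  rcases hiw.eq_or_lt with rfl | hiw
  · refine ⟨w.length - 1, by omega, Or.inr (by omega), ?_, short _ (by simp only [List.length_drop]; omega)⟩
    simpa using h.1.take (w.length - 1)
  obtain ⟨j, rfl⟩ : ∃ j, i = j + 1 := ⟨i - 1, by omega⟩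
  by_cases hasc : w[j] < w[j + 1]
  · refine ⟨j, by omega, Or.inr rfl, ?_, ?_⟩
    · simpa [List.take_take] using h.1.take j
    · rw [List.drop_eq_getElem_cons (by omega), List.isChain_cons]
      refine ⟨fun b hb => ?_, h.2⟩
      simp only [List.head?_drop, List.getElem?_eq_getElem hiw, Option.mem_def,
        Option.some.injEq] at hb
      exact hb ▸ hasc
  · refine ⟨j + 2, by omega, Or.inl rfl, ?_, ?_⟩
    · rw [List.take_add_one, List.isChain_append]
      refine ⟨h.1, short _ (by simp), fun a ha b hb => ?_⟩
      obtain rfl : w[j] = a := by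
        simpa [List.getLast?_take, List.getElem?_eq_getElem (show j < w.length by omega)] using ha
      obtain rfl : w[j + 1] = b := by simpa [List.getElem?_eq_getElem hiw] using hb
      exact hasc
    · rw [List.drop_add_one_eq_tail_drop]
      exact h.2.tail

lemma sum_neg_one_pow_splitsAt_eq_zero {w : List Λ} (hw : w ≠ []) :
    ∑ i ∈ (Finset.range (w.length + 1)).filter (SplitsAt w), (-1 : ℤ) ^ i = 0 := by
  set S := (Finset.range (w.length + 1)).filter (SplitsAt w)
  rcases S.eq_empty_or_nonempty with hS | hS
  · simp [hS]
  have mem_S {i : ℕ} : i ∈ S ↔ i ≤ w.length ∧ SplitsAt w i := by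
    simp [S]
  obtain ⟨j, hjS, hmin⟩ : ∃ j ∈ S, ∀ i ∈ S, j ≤ i :=
    ⟨S.min' hS, S.min'_mem hS, fun i hi => S.min'_le i hi⟩
  obtain ⟨hjw, hj⟩ := mem_S.mp hjS
  have hsucc : j + 1 ∈ S := by
    obtain ⟨k, hkw, rfl | rfl, hk⟩ := hj.exists_adjacent hw hjw
    · exact mem_S.mpr ⟨hkw, hk⟩
    · have := hmin k (mem_S.mpr ⟨hkw, hk⟩)
      omega
  have hS_eq : S = {j, j + 1} := by
    ext i
    simp only [Finset.mem_insert, Finset.mem_singleton]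
    refine ⟨fun hi => ?_, by rintro (rfl | rfl) <;> [exact hjS; exact hsucc]⟩
    obtain ⟨hiw, hi'⟩ := mem_S.mp hi
    rcases (hmin i hi).eq_or_lt with h | h
    · exact Or.inl h.symm
    · exact Or.inr (hj.eq_succ_of_lt hi' h hiw)
  rw [hS_eq, Finset.sum_pair (by omega)]
  ring

end SplitPoints

section LabelWord

variable {P Λ : Type} (lab : P → P → Λ)

lemma labelWord_length (l : List P) : (labelWord lab l).length = l.length - 1 := by
  simp [labelWord]

lemma labelWord_take (l : List P) (i : ℕ) :
    labelWord lab (l.take (i + 1)) = (labelWord lab l).take i := by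
  induction l generalizing i with
  | nil => simp [labelWord]
  | cons a t ih =>
    cases t with
    | nil => simp [labelWord]
    | cons b t =>
      cases i with
      | zero => simp [labelWord]
      | succ i => simpa [labelWord] using ih i

lemma labelWord_drop (l : List P) (i : ℕ) :
    labelWord lab (l.drop i) = (labelWord lab l).drop i := by
  have hzip (l : List P) : labelWord lab l = List.zipWith lab l l.tail := by
    simp [labelWord, List.zip, List.map_zipWith]
  simp [hzip, List.drop_zipWith, List.drop_tail, List.tail_drop]

noncomputable def splitPoints [Preorder Λ] (d : List P) : Finset ℕ :=
  (Finset.range d.length).filter (SplitsAt (labelWord lab d))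

@[simp]
lemma mem_splitPoints [Preorder Λ] {d : List P} {i : ℕ} :
    i ∈ splitPoints lab d ↔ i < d.length ∧ SplitsAt (labelWord lab d) i := by
  simp [splitPoints]

end LabelWord

section SaturatedChains

variable {P : Type} [PartialOrder P] {x y z : P} {l : List P}

lemma satChainIn_singleton {a : P} : SatChainIn x y [a] ↔ a = x ∧ a = y :=
  ⟨fun h => by simpa using And.intro h.2.1 h.2.2,
    fun ⟨hx, hy⟩ => ⟨⟨List.cons_ne_nil _ _, List.isChain_singleton _⟩, by simp [hx], by simp [hy]⟩⟩

lemma satChainIn_cons_cons {a b : P} {t : List P} :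
    SatChainIn x y (a :: b :: t) ↔ a = x ∧ x ⋖ b ∧ SatChainIn b y (b :: t) := by
  constructor
  · rintro ⟨⟨-, hc⟩, ha, hl⟩
    obtain ⟨hab, hc⟩ := List.isChain_cons_cons.mp hc
    obtain rfl : a = x := by simpa using ha
    exact ⟨rfl, hab, ⟨List.cons_ne_nil _ _, hc⟩, rfl, by rwa [List.getLast?_cons_cons] at hl⟩
  · rintro ⟨rfl, hab, ⟨-, hc⟩, -, hl⟩
    exact ⟨⟨List.cons_ne_nil _ _, List.isChain_cons_cons.mpr ⟨hab, hc⟩⟩, rfl,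
      by rwa [List.getLast?_cons_cons]⟩

theorem SatChainIn.le : ∀ {l : List P} {x y : P}, SatChainIn x y l → x ≤ y
  | [], _, _, h => absurd rfl h.1.1
  | [_], _, _, h => by obtain ⟨rfl, rfl⟩ := satChainIn_singleton.mp h; rfl
  | _ :: _ :: _, _, _, h => by
    obtain ⟨rfl, hab, h'⟩ := satChainIn_cons_cons.mp h
    exact hab.le.trans h'.le

theorem SatChainIn.rank_add_one {ρ : P → ℕ} (hρ : ∀ x y : P, x ⋖ y → ρ y = ρ x + 1) :
    ∀ {l : List P} {x y : P}, SatChainIn x y l → ρ y + 1 = ρ x + l.length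
  | [], _, _, h => absurd rfl h.1.1
  | [_], _, _, h => by obtain ⟨rfl, rfl⟩ := satChainIn_singleton.mp h; rfl
  | _ :: _ :: _, _, _, h => by
    obtain ⟨rfl, hab, h'⟩ := satChainIn_cons_cons.mp h
    have := h'.rank_add_one hρ
    simp only [List.length_cons, hρ _ _ hab] at this ⊢
    omega

lemma satChainIn_self_iff : SatChainIn x x l ↔ l = [x] := by
  refine ⟨fun h => ?_, by rintro rfl; exact satChainIn_singleton.mpr ⟨rfl, rfl⟩⟩
  match l, h with
  | [], h => exact absurd rfl h.1.1
  | [_], h => rw [(satChainIn_singleton.mp h).1]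
  | _ :: _ :: _, h =>
    obtain ⟨rfl, hab, h'⟩ := satChainIn_cons_cons.mp h
    exact absurd h'.le hab.lt.not_ge

lemma SatChainIn.one_lt_length (h : SatChainIn x y l) (hxy : x ≠ y) : 1 < l.length := by
  match l, h with
  | [], h => exact absurd rfl h.1.1
  | [_], h => obtain ⟨rfl, rfl⟩ := satChainIn_singleton.mp h; exact absurd rfl hxy
  | _ :: _ :: _, _ => simp

lemma SatChainIn.take (h : SatChainIn x y l) {i : ℕ} (hi : i < l.length) :
    SatChainIn x l[i] (l.take (i + 1)) := by
  refine ⟨⟨by simp [h.1.1], h.1.2.take _⟩, ?_, ?_⟩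
  · simpa [List.head?_take] using h.2.1
  · simp [List.getLast?_take, List.getElem?_eq_getElem hi]

lemma SatChainIn.drop (h : SatChainIn x y l) {i : ℕ} (hi : i < l.length) :
    SatChainIn l[i] y (l.drop i) := by
  refine ⟨⟨by simp [hi], h.1.2.drop _⟩, ?_, ?_⟩
  · simp [List.head?_drop, List.getElem?_eq_getElem hi]
  · simpa [List.getLast?_drop, hi.not_ge] using h.2.2

lemma SatChainIn.append_tail {c e : List P} (hc : SatChainIn x y c) (he : SatChainIn y z e) :
    SatChainIn x z (c ++ e.tail) := by
  obtain ⟨c, rfl⟩ := List.getLast?_eq_some_iff.mp hc.2.2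
  obtain ⟨t, rfl⟩ := List.head?_eq_some_iff.mp he.2.1
  refine ⟨⟨by simp, ?_⟩, ?_, ?_⟩
  · exact List.IsChain.append_overlap hc.1.2 he.1.2 (by simp)
  · simpa [List.head?_append] using hc.2.1
  · simpa using he.2.2

end SaturatedChains

namespace IsER

variable {P Λ : Type} [PartialOrder P] [Preorder Λ] {lab : P → P → Λ} {x y : P}
variable (hER : IsER lab)
include hER

noncomputable def incChain (x y : P) : List P :=
  if h : x ≤ y then (hER x y h).exists.choose else [x]

lemma incChain_spec (h : x ≤ y) :
    SatChainIn x y (hER.incChain x y) ∧ IsIncreasing (labelWord lab (hER.incChain x y)) := by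
  rw [incChain, dif_pos h]
  exact (hER x y h).exists.choose_spec

lemma eq_incChain {l : List P} (hl : SatChainIn x y l) (hinc : IsIncreasing (labelWord lab l)) :
    l = hER.incChain x y :=
  (hER x y hl.le).unique ⟨hl, hinc⟩ (hER.incChain_spec hl.le)

lemma append_incChain {z : P} {c : List P} (hc : SatChainIn x z c) (hzy : z ≤ y) :
    SatChainIn x y (c ++ (hER.incChain z y).tail) ∧
      (c ++ (hER.incChain z y).tail).drop (c.length - 1) = hER.incChain z y :=
  ⟨hc.append_tail (hER.incChain_spec hzy).1,
    List.drop_length_sub_one_append_tail hc.2.2 (hER.incChain_spec hzy).1.2.1⟩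

lemma splitsAt_append_incChain {z : P} {c : List P} (hc : SatChainIn x z c)
    (haf : IsAscentFree (labelWord lab c)) (hzy : z ≤ y) :
    SplitsAt (labelWord lab (c ++ (hER.incChain z y).tail)) (c.length - 1) := by
  constructor
  · rw [← labelWord_take, Nat.sub_add_cancel (List.length_pos_iff.mpr hc.1.1),
      List.take_left' rfl]
    exact haf
  · rw [← labelWord_drop, (hER.append_incChain hc hzy).2]
    exact (hER.incChain_spec hzy).2

lemma drop_eq_incChain {d : List P} (hd : SatChainIn x y d) {i : ℕ} (hi : i < d.length)
    (hsplit : SplitsAt (labelWord lab d) i) : d.drop i = hER.incChain d[i] y := by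
  refine hER.eq_incChain (hd.drop hi) ?_
  rw [labelWord_drop]
  exact hsplit.2

end IsER

section FinitePoset

variable {P Λ : Type} [PartialOrder P] [Fintype P] [Preorder Λ] {lab : P → P → Λ} {x y : P}

theorem mobius_eq_of_sum_eq_zero {f : P → ℤ} (hx : f x = 1)
    (hf : ∀ y, x < y → ∑ z ∈ Finset.univ.filter (fun z => x ≤ z ∧ z ≤ y), f z = 0)
    (hxy : x ≤ y) : mobius x y = f y := by
  induction y using WellFoundedLT.induction with
  | _ y ih =>
  rcases hxy.eq_or_lt with rfl | hxy
  · rw [mobius, if_pos rfl, hx]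
  have hsplit : Finset.univ.filter (fun z => x ≤ z ∧ z ≤ y) =
      insert y (Finset.univ.filter fun z => x ≤ z ∧ z < y) := by
    ext z
    simp only [Finset.mem_filter, Finset.mem_univ, true_and, Finset.mem_insert]
    constructor
    · rintro ⟨hxz, hzy⟩
      exact hzy.eq_or_lt.imp id (And.intro hxz)
    · rintro (rfl | ⟨hxz, hzy⟩)
      exacts [⟨hxy.le, le_rfl⟩, ⟨hxz, hzy.le⟩]
  have hsum := hf y hxy
  rw [hsplit, Finset.sum_insert (by simp)] at hsum
  rw [mobius, if_neg hxy.ne, Finset.sum_attach _ (mobius x), Finset.sum_congr rfl fun z hz =>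
    ih z (Finset.mem_filter.mp hz).2.2 (Finset.mem_filter.mp hz).2.1]
  linarith

lemma finite_setOf_isChain_covBy : {l : List P | l.IsChain (· ⋖ ·)}.Finite :=
  (List.finite_length_le P (Fintype.card P)).subset fun l hl => by
    have hnodup : l.Nodup :=
      (List.isChain_iff_pairwise.mp (hl.imp fun _ _ h => h.lt)).imp ne_of_lt
    exact hnodup.length_le_card

noncomputable def satChains (x y : P) : Finset (List P) :=
  (finite_setOf_isChain_covBy.subset fun _ (hl : SatChainIn x y _) => hl.1.2).toFinset

@[simp]
lemma mem_satChains {l : List P} : l ∈ satChains x y ↔ SatChainIn x y l :=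
  Set.Finite.mem_toFinset _

lemma card_satChain_length_eq_sum {ρ : P → ℕ} (hρ : ∀ x y : P, x ⋖ y → ρ y = ρ x + 1)
    (b : P) (p : List P → Prop) (k : ℕ) :
    Nat.card {l : List P // IsSatChain l ∧ l.head? = some b ∧ l.length = k + 1 ∧ p l} =
      ∑ x ∈ Finset.univ.filter (fun x => ρ x = ρ b + k), ((satChains b x).filter p).card := by
  have hset : {l : List P | IsSatChain l ∧ l.head? = some b ∧ l.length = k + 1 ∧ p l} =
      ↑((Finset.univ.filter (fun x => ρ x = ρ b + k)).biUnion
        fun x => (satChains b x).filter p) := by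
    ext l
    simp only [Set.mem_ofPred_eq, Finset.coe_biUnion, Finset.coe_filter, Finset.mem_univ,
      true_and, Set.mem_iUnion, mem_satChains, exists_prop]
    constructor
    · rintro ⟨hl, hb, hlen, hp⟩
      have hc : SatChainIn b (l.getLast hl.1) l := ⟨hl, hb, List.getLast?_eq_some_getLast hl.1⟩
      have := hc.rank_add_one hρ
      exact ⟨_, by omega, hc, hp⟩
    · rintro ⟨x, hx, hc, hp⟩
      have := hc.rank_add_one hρ
      exact ⟨hc.1, hc.2.1, by omega, hp⟩
  rw [← Set.coe_ofPred, hset, Nat.card_coe_set_eq, Set.ncard_coe_finset, Finset.card_biUnion]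
  intro x _ x' _ hne
  refine Finset.disjoint_left.mpr fun l hl hl' => hne ?_
  simp only [Finset.mem_filter, mem_satChains] at hl hl'
  exact Option.some.inj (hl.1.2.2.symm.trans hl'.1.2.2)

variable (lab) in
noncomputable def ascentFreeChains (x y : P) : Finset (List P) :=
  (satChains x y).filter fun l => IsAscentFree (labelWord lab l)

@[simp]
lemma mem_ascentFreeChains {l : List P} :
    l ∈ ascentFreeChains lab x y ↔ SatChainIn x y l ∧ IsAscentFree (labelWord lab l) := by
  simp [ascentFreeChains]

lemma ascentFreeChains_self (x : P) : ascentFreeChains lab x x = {[x]} := by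
  ext l
  simp only [mem_ascentFreeChains, satChainIn_self_iff, Finset.mem_singleton,
    and_iff_left_iff_imp]
  rintro rfl
  exact List.isChain_nil

namespace IsER

variable (hER : IsER lab)
include hER

lemma card_filter_isIncreasing (h : x ≤ y) :
    ((satChains x y).filter fun l => IsIncreasing (labelWord lab l)).card = 1 := by
  refine Finset.card_eq_one.mpr ⟨hER.incChain x y, Finset.ext fun l => ?_⟩
  simp only [Finset.mem_filter, mem_satChains, Finset.mem_singleton]
  exact ⟨fun hl => hER.eq_incChain hl.1 hl.2, fun hl => hl ▸ hER.incChain_spec h⟩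

lemma sum_sigma_ascentFreeChains_eq {M : Type*} [AddCommMonoid M] (f : ℕ → M) :
    ∑ p ∈ (Finset.univ.filter fun z => x ≤ z ∧ z ≤ y).sigma (ascentFreeChains lab x),
        f (p.2.length - 1) =
      ∑ q ∈ (satChains x y).sigma (splitPoints lab), f q.2 := by
  refine Finset.sum_nbij' (fun p => ⟨p.2 ++ (hER.incChain p.1 y).tail, p.2.length - 1⟩)
    (fun q => ⟨q.1.getD q.2 x, q.1.take (q.2 + 1)⟩) ?_ ?_ ?_ ?_ fun _ _ => rfl
  · rintro ⟨z, c⟩ hp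
    simp only [Finset.mem_sigma, Finset.mem_filter, Finset.mem_univ, true_and,
      mem_ascentFreeChains] at hp
    obtain ⟨⟨-, hzy⟩, hc, haf⟩ := hp
    simp only [Finset.mem_sigma, mem_satChains, mem_splitPoints]
    refine ⟨(hER.append_incChain hc hzy).1, ?_, hER.splitsAt_append_incChain hc haf hzy⟩
    have := List.length_pos_iff.mpr hc.1.1
    simp only [List.length_append, List.length_tail]
    omega
  · rintro ⟨d, i⟩ hq
    simp only [Finset.mem_sigma, mem_satChains, mem_splitPoints] at hq
    obtain ⟨hd, hi, hsplit⟩ := hq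
    simp only [Finset.mem_sigma, Finset.mem_filter, Finset.mem_univ, true_and,
      mem_ascentFreeChains, List.getD_eq_getElem _ _ hi]
    refine ⟨⟨(hd.take hi).le, (hd.drop hi).le⟩, hd.take hi, ?_⟩
    rw [labelWord_take]
    exact hsplit.1
  · rintro ⟨z, c⟩ hp
    simp only [Finset.mem_sigma, Finset.mem_filter, Finset.mem_univ, true_and,
      mem_ascentFreeChains] at hp
    obtain ⟨⟨-, hzy⟩, hc, -⟩ := hp
    have hdrop := (hER.append_incChain hc hzy).2
    have hget : (c ++ (hER.incChain z y).tail).getD (c.length - 1) x = z := by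
      rw [List.getD_eq_getElem?_getD, ← List.head?_drop, hdrop, (hER.incChain_spec hzy).1.2.1,
        Option.getD_some]
    simp only [hget, Nat.sub_add_cancel (List.length_pos_iff.mpr hc.1.1), List.take_left' rfl]
  · rintro ⟨d, i⟩ hq
    simp only [Finset.mem_sigma, mem_satChains, mem_splitPoints] at hq
    obtain ⟨hd, hi, hsplit⟩ := hq
    simp only [List.getD_eq_getElem _ _ hi, ← hER.drop_eq_incChain hd hi hsplit, List.tail_drop,
      List.take_append_drop, List.length_take, min_eq_left (Nat.add_one_le_of_lt hi),
      Nat.add_sub_cancel]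

lemma sum_ascentFreeChains_eq_zero (hxy : x < y) :
    ∑ z ∈ Finset.univ.filter (fun z => x ≤ z ∧ z ≤ y),
      ∑ c ∈ ascentFreeChains lab x z, (-1 : ℤ) ^ (c.length - 1) = 0 := by
  rw [Finset.sum_sigma', hER.sum_sigma_ascentFreeChains_eq, Finset.sum_sigma]
  refine Finset.sum_eq_zero fun d hd => ?_
  have hlen := (mem_satChains.mp hd).one_lt_length hxy.ne
  have hw : labelWord lab d ≠ [] := by
    rw [← List.length_pos_iff, labelWord_length]
    omega
  have := sum_neg_one_pow_splitsAt_eq_zero hw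
  rwa [labelWord_length, Nat.sub_add_cancel hlen.le] at this

theorem mobius_eq_sum_ascentFreeChains (hxy : x ≤ y) :
    mobius x y = ∑ c ∈ ascentFreeChains lab x y, (-1 : ℤ) ^ (c.length - 1) :=
  mobius_eq_of_sum_eq_zero (by simp [ascentFreeChains_self])
    (fun _ => hER.sum_ascentFreeChains_eq_zero) hxy

theorem mobius_eq_neg_one_pow_mul_card {ρ : P → ℕ} (hρ : ∀ x y : P, x ⋖ y → ρ y = ρ x + 1)
    (hxy : x ≤ y) :
    mobius x y = (-1 : ℤ) ^ (ρ y - ρ x) * (ascentFreeChains lab x y).card := by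
  rw [hER.mobius_eq_sum_ascentFreeChains hxy, mul_comm, ← nsmul_eq_mul, ← Finset.sum_const]
  refine Finset.sum_congr rfl fun c hc => ?_
  have := (mem_ascentFreeChains.mp hc).1.rank_add_one hρ
  rw [show c.length - 1 = ρ y - ρ x by omega]

end IsER

end FinitePoset

/-- **Proposition.** If `λ` is an ER-labeling of a finite graded poset `P`, then `|w_k(P)|`
is the number of ascent-free saturated chains of length `k` starting at `⊥`, and `W_k(P)`
is the number of strictly increasing saturated chains of length `k` starting at `⊥`. -/
theorem whitney_numbers_of_isER {P Λ : Type} [PartialOrder P] [Fintype P] [OrderBot P]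
    [PartialOrder Λ] (ρ : P → ℕ) (hρ0 : ρ (⊥ : P) = 0)
    (hρ : ∀ x y : P, x ⋖ y → ρ y = ρ x + 1)
    (lab : P → P → Λ) (hER : IsER lab) :
    ∀ k : ℕ,
      (whitney1 ρ (⊥ : P) k).natAbs =
        Nat.card {l : List P // IsSatChain l ∧ l.head? = some (⊥ : P) ∧
          l.length = k + 1 ∧ IsAscentFree (labelWord lab l)} ∧
      whitney2 ρ k =
        Nat.card {l : List P // IsSatChain l ∧ l.head? = some (⊥ : P) ∧
          l.length = k + 1 ∧ IsIncreasing (labelWord lab l)} := by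
  intro k
  have hcount (p : List P → Prop) := card_satChain_length_eq_sum hρ ⊥ p k
  simp only [hρ0, zero_add] at hcount
  refine ⟨?_, ?_⟩
  · have hw : whitney1 ρ ⊥ k = (-1 : ℤ) ^ k *
        ∑ x ∈ Finset.univ.filter (fun x => ρ x = k), ((ascentFreeChains lab ⊥ x).card : ℤ) := by
      rw [whitney1, Finset.mul_sum]
      refine Finset.sum_congr rfl fun x hx => ?_
      rw [hER.mobius_eq_neg_one_pow_mul_card hρ bot_le, hρ0, (Finset.mem_filter.mp hx).2,
        Nat.sub_zero]
    rw [hw, Int.natAbs_mul, Int.natAbs_pow, Int.natAbs_neg, Int.natAbs_one, one_pow, one_mul,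
      ← Nat.cast_sum, Int.natAbs_natCast, hcount]
    rfl
  · rw [whitney2, Finset.card_eq_sum_ones, hcount]
    exact Finset.sum_congr rfl fun x _ => (hER.card_filter_isIncreasing bot_le).symm
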